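/- Let n ≥ 1, let η_min ∈ ℝ, λ ≥ 0 with η_min + λ > 0, and let ω ≥ 0, e ≥ 0, ψ ≥ 0, σ > 0, B > 0, B_L ≥ 0, d ≥ 1. Let Y ∈ {−1, 1}^n, let k, k̃ ∈ ℝ^n satisfy |k_i| ≤ ω for all i ∈ [n] and ‖k̃ − k‖_2 ≤ 2√n σ² B³ √d B_L, and let K, K̃ be real symmetric n×n matrices with K ⪰ η_min I_n, K̃ ⪰ η_min I_n, and ‖K − K̃‖ ≤ ψ, where ‖·‖ is the spectral norm. Then |(1/n) k̃^⊤ (K̃ + λI_n)^{-1} Y − (1/n) k^⊤ (K + λI_n)^{-1} Y| ≤ 2σ²B³√d B_L / (η_min + λ) + ω ψ / (η_min + λ)². -/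

import Mathlib

/-!
Write `w = (K + λI)⁻¹ Y` and `w̃ = (K̃ + λI)⁻¹ Y`. The error splits as
`k̃ᵀ w̃ - kᵀ w = (k̃ - k)ᵀ w̃ + kᵀ (w̃ - w)`, and the resolvent identity gives
`w̃ - w = (K̃ + λI)⁻¹ (K - K̃) w`. Since `K + λI ⪰ (η_min + λ) I`, both inverses have spectral norm
at most `1 / (η_min + λ)`, so Cauchy–Schwarz bounds the two terms by
`‖k̃ - k‖ ‖Y‖ / (η_min + λ)` and `‖k‖ ‖K - K̃‖ ‖Y‖ / (η_min + λ)²`, with `‖Y‖ = √n` and `‖k‖ ≤ √n ω`.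
-/

open Matrix
/-- Spectral (ℓ₂ operator) norm of a real matrix. -/
noncomputable def sNorm {n : ℕ} (A : Matrix (Fin n) (Fin n) ℝ) : ℝ :=
  ‖Matrix.toEuclideanCLM (𝕜 := ℝ) A‖

/-- Euclidean norm on `Fin n → ℝ`. -/
noncomputable def l2 {n : ℕ} (u : Fin n → ℝ) : ℝ := Real.sqrt (∑ s, u s ^ 2)

section

variable {n : ℕ}

lemma l2_nonneg (u : Fin n → ℝ) : 0 ≤ l2 u := Real.sqrt_nonneg _

lemma l2_eq_norm_toLp (u : Fin n → ℝ) : l2 u = ‖WithLp.toLp 2 u‖ := by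
  simp [l2, EuclideanSpace.norm_eq, Real.norm_eq_abs, sq_abs]

lemma dotProduct_self_eq_l2_sq (u : Fin n → ℝ) : u ⬝ᵥ u = l2 u ^ 2 := by
  rw [l2, Real.sq_sqrt (by positivity)]
  simp [dotProduct, pow_two]

lemma abs_dotProduct_le_l2_mul_l2 (u v : Fin n → ℝ) : |u ⬝ᵥ v| ≤ l2 u * l2 v := by
  rw [← Real.sqrt_sq_eq_abs, l2, l2, ← Real.sqrt_mul (by positivity)]
  exact Real.sqrt_le_sqrt (Finset.sum_mul_sq_le_sq_mul_sq _ u v)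

lemma l2_le_sqrt_card_mul {a : ℝ} (ha : 0 ≤ a) {u : Fin n → ℝ} (hu : ∀ i, |u i| ≤ a) :
    l2 u ≤ Real.sqrt n * a := by
  have hsum : ∑ i, u i ^ 2 ≤ n * a ^ 2 := by
    calc ∑ i, u i ^ 2 ≤ ∑ _i : Fin n, a ^ 2 :=
          Finset.sum_le_sum fun i _ => sq_le_sq' (abs_le.mp (hu i)).1 (abs_le.mp (hu i)).2
      _ = n * a ^ 2 := by simp
  calc l2 u ≤ Real.sqrt (n * a ^ 2) := Real.sqrt_le_sqrt hsum
    _ = Real.sqrt n * a := by rw [Real.sqrt_mul (by positivity), Real.sqrt_sq ha]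

lemma l2_mulVec_le (A : Matrix (Fin n) (Fin n) ℝ) (v : Fin n → ℝ) :
    l2 (A *ᵥ v) ≤ sNorm A * l2 v := by
  rw [l2_eq_norm_toLp, l2_eq_norm_toLp, sNorm, ← Matrix.toEuclideanCLM_toLp]
  exact ContinuousLinearMap.le_opNorm _ _

lemma sNorm_nonneg (A : Matrix (Fin n) (Fin n) ℝ) : 0 ≤ sNorm A := norm_nonneg _

lemma posDef_of_posSemidef_sub_smul_one {c : ℝ} (hc : 0 < c) {M : Matrix (Fin n) (Fin n) ℝ}
    (hM : (M - c • 1).PosSemidef) : M.PosDef := by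
  simpa using PosDef.posSemidef_add hM (PosDef.one.smul hc)

lemma mulVec_inv_mulVec {M : Matrix (Fin n) (Fin n) ℝ} (hM : M.PosDef) (v : Fin n → ℝ) :
    M *ᵥ (M⁻¹ *ᵥ v) = v := by
  rw [mulVec_mulVec, mul_nonsing_inv _ hM.det_pos.ne'.isUnit, one_mulVec]

lemma inv_mulVec_mulVec {M : Matrix (Fin n) (Fin n) ℝ} (hM : M.PosDef) (v : Fin n → ℝ) :
    M⁻¹ *ᵥ (M *ᵥ v) = v := by
  rw [mulVec_mulVec, nonsing_inv_mul _ hM.det_pos.ne'.isUnit, one_mulVec]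

/-- With `w = M⁻¹ v`: `c ‖w‖² ≤ wᵀ M w = wᵀ v ≤ ‖w‖ ‖v‖`. -/
lemma l2_inv_mulVec_le {c : ℝ} (hc : 0 < c) {M : Matrix (Fin n) (Fin n) ℝ}
    (hM : (M - c • 1).PosSemidef) (v : Fin n → ℝ) : l2 (M⁻¹ *ᵥ v) ≤ l2 v / c := by
  set w := M⁻¹ *ᵥ v
  have hMw : M *ᵥ w = v := mulVec_inv_mulVec (posDef_of_posSemidef_sub_smul_one hc hM) v
  have hquad : c * l2 w ^ 2 ≤ l2 w * l2 v := by
    have h := hM.dotProduct_mulVec_nonneg w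
    rw [star_trivial, sub_mulVec, dotProduct_sub, smul_mulVec, one_mulVec, dotProduct_smul,
      smul_eq_mul, hMw, dotProduct_self_eq_l2_sq] at h
    linarith [le_of_abs_le (abs_dotProduct_le_l2_mul_l2 w v)]
  rw [le_div_iff₀ hc]
  rcases (l2_nonneg w).eq_or_lt with hw | hw
  · rw [← hw, zero_mul]; exact l2_nonneg v
  · nlinarith

lemma abs_dotProduct_inv_mulVec_sub_le {c : ℝ} (hc : 0 < c) {M Mt : Matrix (Fin n) (Fin n) ℝ}
    (hM : (M - c • 1).PosSemidef) (hMt : (Mt - c • 1).PosSemidef) (k kt y : Fin n → ℝ) :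
    |kt ⬝ᵥ (Mt⁻¹ *ᵥ y) - k ⬝ᵥ (M⁻¹ *ᵥ y)| ≤
      l2 (kt - k) * l2 y / c + l2 k * (sNorm (M - Mt) * l2 y) / c ^ 2 := by
  set w := M⁻¹ *ᵥ y
  set wt := Mt⁻¹ *ᵥ y
  have hresolvent : wt - w = Mt⁻¹ *ᵥ ((M - Mt) *ᵥ w) := by
    rw [sub_mulVec, mulVec_inv_mulVec (posDef_of_posSemidef_sub_smul_one hc hM),
      ← mulVec_inv_mulVec (posDef_of_posSemidef_sub_smul_one hc hMt) y, ← mulVec_sub,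
      inv_mulVec_mulVec (posDef_of_posSemidef_sub_smul_one hc hMt)]
  have hw : l2 w ≤ l2 y / c := l2_inv_mulVec_le hc hM y
  have hdiff : l2 (wt - w) ≤ sNorm (M - Mt) * l2 y / c ^ 2 := by
    calc l2 (wt - w) ≤ l2 ((M - Mt) *ᵥ w) / c := hresolvent ▸ l2_inv_mulVec_le hc hMt _
      _ ≤ sNorm (M - Mt) * (l2 y / c) / c := by
          gcongr
          exact (l2_mulVec_le _ _).trans (by gcongr; exact sNorm_nonneg _)
      _ = sNorm (M - Mt) * l2 y / c ^ 2 := by ring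
  have hsplit : kt ⬝ᵥ wt - k ⬝ᵥ w = (kt - k) ⬝ᵥ wt + k ⬝ᵥ (wt - w) := by
    rw [sub_dotProduct, dotProduct_sub]; ring
  rw [hsplit, mul_div_assoc, mul_div_assoc]
  refine (abs_add_le _ _).trans (add_le_add ?_ ?_)
  · exact (abs_dotProduct_le_l2_mul_l2 _ _).trans
      (mul_le_mul_of_nonneg_left (l2_inv_mulVec_le hc hMt y) (l2_nonneg _))
  · exact (abs_dotProduct_le_l2_mul_l2 _ _).trans
      (mul_le_mul_of_nonneg_left hdiff (l2_nonneg _))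

end

theorem ntk_regression_utility_general {n : ℕ} (hn : 1 ≤ n)
    (ηmin lam ω ψ σ B BL : ℝ) (d : ℕ)
    (hpos : 0 < ηmin + lam)
    (hω : 0 ≤ ω)
    (Y : Fin n → ℝ) (hY : ∀ i, Y i = -1 ∨ Y i = 1)
    (k kt : Fin n → ℝ) (hk : ∀ i, |k i| ≤ ω)
    (hkt : l2 (kt - k) ≤ 2 * Real.sqrt n * σ ^ 2 * B ^ 3 * Real.sqrt d * BL)
    (K Kt : Matrix (Fin n) (Fin n) ℝ)
    (hKlow : (K - ηmin • (1 : Matrix (Fin n) (Fin n) ℝ)).PosSemidef)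
    (hKtlow : (Kt - ηmin • (1 : Matrix (Fin n) (Fin n) ℝ)).PosSemidef)
    (hKdiff : sNorm (K - Kt) ≤ ψ) :
    |(1 / (n : ℝ)) * (kt ⬝ᵥ ((Kt + lam • (1 : Matrix (Fin n) (Fin n) ℝ))⁻¹ *ᵥ Y)) -
        (1 / (n : ℝ)) * (k ⬝ᵥ ((K + lam • (1 : Matrix (Fin n) (Fin n) ℝ))⁻¹ *ᵥ Y))| ≤
      2 * σ ^ 2 * B ^ 3 * Real.sqrt d * BL / (ηmin + lam) +
        ω * ψ / (ηmin + lam) ^ 2 := by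
  have hshift : ∀ A : Matrix (Fin n) (Fin n) ℝ,
      A + lam • 1 - (ηmin + lam) • 1 = A - ηmin • 1 := fun A => by rw [add_smul]; abel
  have hmain := abs_dotProduct_inv_mulVec_sub_le hpos
    ((hshift K).symm ▸ hKlow) ((hshift Kt).symm ▸ hKtlow) k kt Y
  rw [show K + lam • 1 - (Kt + lam • 1) = K - Kt by abel] at hmain
  have hlY : l2 Y ≤ Real.sqrt n * 1 :=
    l2_le_sqrt_card_mul zero_le_one fun i => by rcases hY i with h | h <;> simp [h]
  have hkω : l2 k ≤ Real.sqrt n * ω := l2_le_sqrt_card_mul hω hk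
  have hn0 : (n : ℝ) ≠ 0 := by positivity
  have hsqrt : Real.sqrt n * Real.sqrt n = n := Real.mul_self_sqrt n.cast_nonneg
  rw [← mul_sub, abs_mul, abs_of_nonneg (by positivity)]
  calc 1 / (n : ℝ) * |kt ⬝ᵥ ((Kt + lam • 1)⁻¹ *ᵥ Y) - k ⬝ᵥ ((K + lam • 1)⁻¹ *ᵥ Y)|
      ≤ 1 / n * ((2 * Real.sqrt n * σ ^ 2 * B ^ 3 * Real.sqrt d * BL) * (Real.sqrt n * 1)
          / (ηmin + lam) + (Real.sqrt n * ω) * (ψ * (Real.sqrt n * 1)) / (ηmin + lam) ^ 2) := by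
        gcongr
        refine hmain.trans (add_le_add ?_ ?_)
        · gcongr
          exacts [l2_nonneg Y, (l2_nonneg _).trans hkt]
        · gcongr
          exacts [mul_nonneg (sNorm_nonneg _) (l2_nonneg Y), l2_nonneg Y,
            (sNorm_nonneg _).trans hKdiff]
    _ = 2 * σ ^ 2 * B ^ 3 * Real.sqrt d * BL / (ηmin + lam) + ω * ψ / (ηmin + lam) ^ 2 := by
        field_simp
        linear_combination (2 * σ ^ 2 * B ^ 3 * Real.sqrt d * BL * (ηmin + lam)
          + ω * ψ) * hsqrt

/-- deterministic utility bound for private NTK regression.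
With `f_K(x) = (1/n) kᵀ (K + λI)⁻¹ Y` and privatized counterparts `k̃, K̃`,
`|f_K̃(x) − f_K(x)| ≤ 2σ²B³√d B_L/(η_min + λ) + ω ψ/(η_min + λ)²`. -/
theorem ntk_regression_utility {n : ℕ} (hn : 1 ≤ n)
    (ηmin lam ω e ψ σ B BL : ℝ) (d : ℕ)
    (hpos : 0 < ηmin + lam) (hlam : 0 ≤ lam)
    (hω : 0 ≤ ω) (he : 0 ≤ e) (hψ : 0 ≤ ψ) (hσ : 0 < σ) (hB : 0 < B)
    (hBL : 0 ≤ BL) (hd : 1 ≤ d)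
    (Y : Fin n → ℝ) (hY : ∀ i, Y i = -1 ∨ Y i = 1)
    (k kt : Fin n → ℝ) (hk : ∀ i, |k i| ≤ ω)
    (hkt : l2 (kt - k) ≤ 2 * Real.sqrt n * σ ^ 2 * B ^ 3 * Real.sqrt d * BL)
    (K Kt : Matrix (Fin n) (Fin n) ℝ) (hKs : K.IsSymm) (hKts : Kt.IsSymm)
    (hKlow : (K - ηmin • (1 : Matrix (Fin n) (Fin n) ℝ)).PosSemidef)
    (hKtlow : (Kt - ηmin • (1 : Matrix (Fin n) (Fin n) ℝ)).PosSemidef)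
    (hKdiff : sNorm (K - Kt) ≤ ψ) :
    |(1 / (n : ℝ)) * (kt ⬝ᵥ ((Kt + lam • (1 : Matrix (Fin n) (Fin n) ℝ))⁻¹ *ᵥ Y)) -
        (1 / (n : ℝ)) * (k ⬝ᵥ ((K + lam • (1 : Matrix (Fin n) (Fin n) ℝ))⁻¹ *ᵥ Y))| ≤
      2 * σ ^ 2 * B ^ 3 * Real.sqrt d * BL / (ηmin + lam) +
        ω * ψ / (ηmin + lam) ^ 2 :=
  ntk_regression_utility_general hn ηmin lam ω ψ σ B BL d hpos hω Y hY k kt hk hkt K Kt hKlow hKtlow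
    hKdiff
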